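/- Let h be strictly increasing with h(i) ≥ 1 and suppose h(n+1) > (n+2)·h(n) + 1 for all n. If α = Σ_{i=0}^∞ P_i^(-h(i)) were rational with denominator q whose prime factorization has P_i-exponent q_i, then for n with P_n greater than every prime factor of q and h(n) > q_0 + ... + q_n, the inequalities 1/Π_{i=0}^n P_i^(h(i)+q_i) ≤ α − α_n ≤ P_{n+1}^(−h(n+1)+1) lead to h(n+1) ≤ (n+2)h(n) + 1, a contradiction; hence α is irrational. -/

import Mathlib

/-- `P i` is the `i`-th prime number (`P 0 = 2`). -/
noncomputable def P (i : ℕ) : ℕ := Nat.nth Nat.Prime i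

/-! With `Dₙ = ∏_{i ≤ n} P_i^{h(i)}`, the number `Dₙ α` is an integer plus `Dₙ` times the tail
`∑_{i > n} P_i^{-h(i)}`. Since `h` increases, each term of the series is at most half the previous
one, so the tail is at most `2 P_{n+1}^{-h(n+1)}`; together with `Dₙ ≤ P_{n+1}^{(n+1) h(n)}` and the
growth of `h` this gives `0 < Dₙ α - mₙ ≤ 2 / P_{n+1}`. If `α` were `a / q`, then `q (Dₙ α - mₙ)`
would be a positive integer below `1` as soon as `P_{n+1} > 2q`. -/

open Finset

theorem irrational_of_forall_exists_int_mul_sub_pos_lt {x : ℝ}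
    (H : ∀ ε > 0, ∃ a b : ℤ, 0 < b * x - a ∧ b * x - a < ε) : Irrational x := by
  rintro ⟨r, rfl⟩
  obtain ⟨a, b, hpos, hlt⟩ := H (1 / r.den) (by positivity)
  have hden : (0 : ℝ) < r.den := by exact_mod_cast r.pos
  have hint : (b * r - a : ℝ) * r.den = ((b * r.num - a * r.den : ℤ) : ℝ) := by
    have hr : (r : ℝ) * r.den = r.num := by exact_mod_cast r.mul_den_eq_num
    push_cast
    rw [sub_mul, mul_assoc, hr]
  have hone : (1 : ℤ) ≤ b * r.num - a * r.den := by
    have : (0 : ℝ) < ((b * r.num - a * r.den : ℤ) : ℝ) := hint ▸ mul_pos hpos hden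
    exact_mod_cast this
  have : (1 : ℝ) ≤ (b * r - a : ℝ) * r.den := hint ▸ by exact_mod_cast hone
  rw [lt_div_iff₀ hden] at hlt
  linarith

theorem le_geometric_of_two_mul_succ_le {f : ℕ → ℝ} (hf : ∀ i, 2 * f (i + 1) ≤ f i) (i : ℕ) :
    f i ≤ f 0 * (1 / 2) ^ i := by
  induction i with
  | zero => simp
  | succ i ih => rw [pow_succ]; linarith [hf i]

theorem summable_and_tsum_le_two_mul_of_two_mul_succ_le {f : ℕ → ℝ} (hf₀ : ∀ i, 0 ≤ f i)
    (hf : ∀ i, 2 * f (i + 1) ≤ f i) : Summable f ∧ ∑' i, f i ≤ 2 * f 0 := by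
  have hgeom : Summable fun i : ℕ => f 0 * (1 / 2 : ℝ) ^ i :=
    (summable_geometric_two).mul_left _
  have hsum : Summable f := .of_nonneg_of_le hf₀ (le_geometric_of_two_mul_succ_le hf) hgeom
  refine ⟨hsum, ?_⟩
  calc ∑' i, f i ≤ ∑' i : ℕ, f 0 * (1 / 2 : ℝ) ^ i :=
        hsum.tsum_le_tsum (le_geometric_of_two_mul_succ_le hf) hgeom
    _ = 2 * f 0 := by rw [tsum_mul_left, tsum_geometric_two, mul_comm]

theorem exists_natCast_eq_prod_mul_sum_inv {ι : Type*} (s : Finset ι) (d : ι → ℕ)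
    (hd : ∀ i ∈ s, d i ≠ 0) : ∃ m : ℕ, ((∏ i ∈ s, d i : ℕ) : ℝ) * ∑ i ∈ s, ((d i : ℝ))⁻¹ = m := by
  classical
  refine ⟨∑ i ∈ s, ∏ j ∈ s.erase i, d j, ?_⟩
  push_cast
  rw [mul_sum]
  refine sum_congr rfl fun i hi => ?_
  rw [← mul_prod_erase s _ hi, mul_comm, ← mul_assoc,
    inv_mul_cancel₀ (by exact_mod_cast hd i hi), one_mul]

theorem P_prime (i : ℕ) : (P i).Prime := Nat.prime_nth_prime i

theorem P_strictMono : StrictMono P := Nat.nth_strictMono Nat.infinite_setOfPred_prime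

theorem add_two_le_P (i : ℕ) : i + 2 ≤ P i := Nat.add_two_le_nth_prime i

namespace PrimePowerSeries

noncomputable def term (h : ℕ → ℕ) (i : ℕ) : ℝ := ((P i : ℝ) ^ h i)⁻¹

noncomputable def denom (h : ℕ → ℕ) (n : ℕ) : ℕ := ∏ i ∈ range (n + 1), P i ^ h i

variable {h : ℕ → ℕ}

theorem term_pos (i : ℕ) : 0 < term h i := by
  have : (0 : ℝ) < P i := by exact_mod_cast (P_prime i).pos
  unfold term
  positivity

theorem two_mul_term_succ_le {i : ℕ} (hi : h i < h (i + 1)) : 2 * term h (i + 1) ≤ term h i := by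
  have hP : 2 * P i ^ h i ≤ P (i + 1) ^ h (i + 1) :=
    calc 2 * P i ^ h i ≤ P i ^ (h i + 1) := by
          rw [pow_succ, mul_comm]; gcongr; exact (P_prime i).two_le
      _ ≤ P i ^ h (i + 1) := Nat.pow_le_pow_right (P_prime i).pos hi
      _ ≤ P (i + 1) ^ h (i + 1) := Nat.pow_le_pow_left (P_strictMono i.lt_succ_self).le _
  have hP' : (2 : ℝ) * P i ^ h i ≤ (P (i + 1) : ℝ) ^ h (i + 1) := by exact_mod_cast hP
  have : (0 : ℝ) < P i := by exact_mod_cast (P_prime i).pos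
  calc 2 * term h (i + 1) ≤ 2 * (2 * (P i : ℝ) ^ h i)⁻¹ := by unfold term; gcongr
    _ = term h i := by rw [mul_inv, ← mul_assoc, mul_inv_cancel₀ two_ne_zero, one_mul, term]

theorem summable_term_add_and_tsum_le (hh : StrictMono h) (n : ℕ) :
    Summable (fun i => term h (i + n)) ∧ ∑' i, term h (i + n) ≤ 2 * term h n := by
  simpa using summable_and_tsum_le_two_mul_of_two_mul_succ_le (fun i => (term_pos (i + n)).le)
    fun i => by
      simpa [add_right_comm] using two_mul_term_succ_le (h := h) (hh (Nat.lt_succ_self (i + n)))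

theorem denom_pos (n : ℕ) : 0 < denom h n :=
  prod_pos fun i _ => pow_pos (P_prime i).pos _

theorem denom_le (hh : Monotone h) (n : ℕ) : denom h n ≤ P (n + 1) ^ ((n + 1) * h n) :=
  calc denom h n ≤ ∏ _i ∈ range (n + 1), P (n + 1) ^ h n := by
        refine prod_le_prod' fun i hi => ?_
        have hi : i ≤ n := Nat.lt_succ_iff.mp (mem_range.mp hi)
        calc P i ^ h i ≤ P (n + 1) ^ h i := Nat.pow_le_pow_left (P_strictMono (by omega)).le _
          _ ≤ P (n + 1) ^ h n := Nat.pow_le_pow_right (P_prime _).pos (hh hi)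
    _ = P (n + 1) ^ ((n + 1) * h n) := by rw [prod_const, card_range, ← pow_mul, mul_comm]

theorem denom_mul_term_succ_le (hh : Monotone h) {n : ℕ} (hn : (n + 1) * h n < h (n + 1)) :
    denom h n * term h (n + 1) ≤ (P (n + 1) : ℝ)⁻¹ := by
  have hP : denom h n * P (n + 1) ≤ P (n + 1) ^ h (n + 1) :=
    calc denom h n * P (n + 1) ≤ P (n + 1) ^ ((n + 1) * h n + 1) := by
          rw [pow_succ]; gcongr; exact denom_le hh n
      _ ≤ P (n + 1) ^ h (n + 1) := Nat.pow_le_pow_right (P_prime _).pos hn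
  have hP' : (denom h n : ℝ) * P (n + 1) ≤ (P (n + 1) : ℝ) ^ h (n + 1) := by exact_mod_cast hP
  have : (0 : ℝ) < P (n + 1) := by exact_mod_cast (P_prime (n + 1)).pos
  unfold term
  rw [← div_eq_mul_inv, div_le_iff₀ (by positivity), inv_mul_eq_div, le_div_iff₀ (by positivity)]
  exact hP'

theorem exists_natCast_eq_denom_mul_sum_term (h : ℕ → ℕ) (n : ℕ) :
    ∃ m : ℕ, (denom h n : ℝ) * ∑ i ∈ range (n + 1), term h i = m := by
  simpa [denom, term] using exists_natCast_eq_prod_mul_sum_inv (range (n + 1))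
    (fun i => P i ^ h i) fun i _ => (pow_pos (P_prime i).pos _).ne'

theorem exists_nat_denom_mul_tsum_sub_pos_le (hgrow : ∀ n, (n + 1) * h n < h (n + 1)) (n : ℕ) :
    ∃ m : ℕ, 0 < denom h n * ∑' i, term h i - m ∧
      denom h n * ∑' i, term h i - m ≤ 2 / (n + 3) := by
  have hh : StrictMono h := strictMono_nat_of_lt_succ fun n =>
    (Nat.le_mul_of_pos_left _ n.succ_pos).trans_lt (hgrow n)
  obtain ⟨hsum, htail⟩ := summable_term_add_and_tsum_le hh (n + 1)
  obtain ⟨m, hm⟩ := exists_natCast_eq_denom_mul_sum_term h n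
  have hsplit := ((summable_nat_add_iff (n + 1)).1 hsum).sum_add_tsum_nat_add (n + 1)
  have hD : (0 : ℝ) < denom h n := by exact_mod_cast denom_pos n
  have hP : (n : ℝ) + 3 ≤ P (n + 1) := by exact_mod_cast add_two_le_P (n + 1)
  have hrem : denom h n * ∑' i, term h i - m = denom h n * ∑' i, term h (i + (n + 1)) := by
    rw [← hsplit, mul_add, hm, add_sub_cancel_left]
  refine ⟨m, hrem ▸ mul_pos hD (hsum.tsum_pos (fun i => (term_pos _).le) 0 (term_pos _)), ?_⟩
  calc denom h n * ∑' i, term h i - m ≤ 2 * (denom h n * term h (n + 1)) := by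
        rw [hrem, mul_left_comm]; gcongr
    _ ≤ 2 * (P (n + 1) : ℝ)⁻¹ := by gcongr; exact denom_mul_term_succ_le hh.monotone (hgrow n)
    _ ≤ 2 / (n + 3) := by rw [div_eq_mul_inv]; gcongr

end PrimePowerSeries

open PrimePowerSeries

theorem alpha_irrational_weak_general
    (h : ℕ → ℕ) (hgrow : ∀ n, (n + 2) * h n + 1 < h (n + 1)) :
    Irrational (∑' i : ℕ, (P i : ℝ) ^ (-(h i : ℤ))) := by
  have hgrow' : ∀ n, (n + 1) * h n < h (n + 1) := fun n => by nlinarith [hgrow n]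
  rw [show (fun i => (P i : ℝ) ^ (-(h i : ℤ))) = term h from
    funext fun i => by rw [zpow_neg, zpow_natCast, term]]
  refine irrational_of_forall_exists_int_mul_sub_pos_lt fun ε hε => ?_
  obtain ⟨n, hn⟩ := exists_nat_gt (2 / ε)
  obtain ⟨m, hpos, hle⟩ := exists_nat_denom_mul_tsum_sub_pos_le hgrow' n
  refine ⟨m, denom h n, by exact_mod_cast hpos, ?_⟩
  push_cast
  refine hle.trans_lt ((div_lt_iff₀ (by positivity)).2 ?_)
  rw [div_lt_iff₀ hε] at hn
  nlinarith

/-- If `h` is strictly increasing with `h i ≥ 1` and `h (n+1) > (n+2)·h n + 1` for all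
`n`, then `α = Σ_{i=0}^∞ P_i^(-h(i))` is irrational. -/
theorem alpha_irrational_weak
    (h : ℕ → ℕ) (hmono : StrictMono h) (hpos : ∀ i, 1 ≤ h i)
    (hgrow : ∀ n, (n + 2) * h n + 1 < h (n + 1)) :
    Irrational (∑' i : ℕ, (P i : ℝ) ^ (-(h i : ℤ))) :=
  alpha_irrational_weak_general h hgrow
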